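/- arXiv:2512.08380 — 4 statements merged into one kernel-verified Lean document; each statement's English description precedes it below -/
import Mathlib

section
/- Let 0 < s ≤ 1 and θ ∈ ℝ. Define v' = v cos θ − v* sin θ and v*' = v sin θ + v* cos θ. Then for every v, v* ∈ ℝ, 2^{s−1} ≤ (⟨v*⟩^{2s} + ⟨v⟩^{2s}) / (⟨v*'⟩^{2s} + ⟨v'⟩^{2s}) ≤ 2^{1−s}. In particular, when s = 1 the ratio equals 1. -/
open scoped NNReal

/-- Subadditivity of `x ↦ x ^ p` on nonnegative reals for `0 ≤ p ≤ 1`. -/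
lemma real_rpow_add_le_add_rpow {p : ℝ} (x y : ℝ) (hx : 0 ≤ x) (hy : 0 ≤ y)
    (hp : 0 ≤ p) (hp1 : p ≤ 1) : (x + y) ^ p ≤ x ^ p + y ^ p := by
  have h := NNReal.rpow_add_le_add_rpow x.toNNReal y.toNNReal hp hp1
  have h2 := NNReal.coe_le_coe.2 h
  push_cast [NNReal.coe_rpow] at h2
  simpa [Real.coe_toNNReal x hx, Real.coe_toNNReal y hy] using h2

/-- Concavity bound: `x^p + y^p ≤ 2^(1-p) (x+y)^p` for `0 < p ≤ 1`. -/
lemma real_add_rpow_le_mul_rpow {p : ℝ} (x y : ℝ) (hx : 0 ≤ x) (hy : 0 ≤ y)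
    (hp : 0 < p) (hp1 : p ≤ 1) :
    x ^ p + y ^ p ≤ (2 : ℝ) ^ (1 - p) * (x + y) ^ p := by
  set a := x.toNNReal
  set b := y.toNNReal
  have hq : (1 : ℝ) ≤ 1 / p := by
    rw [le_div_iff₀ hp]; linarith
  have h := NNReal.rpow_add_le_mul_rpow_add_rpow (a ^ p) (b ^ p) hq
  have hap : (a ^ p) ^ (1 / p) = a := by
    rw [← NNReal.rpow_mul, mul_one_div, div_self hp.ne', NNReal.rpow_one]
  have hbp : (b ^ p) ^ (1 / p) = b := by
    rw [← NNReal.rpow_mul, mul_one_div, div_self hp.ne', NNReal.rpow_one]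
  rw [hap, hbp] at h
  -- raise both sides to power p
  have h2 := NNReal.rpow_le_rpow h hp.le
  rw [← NNReal.rpow_mul, one_div, inv_mul_cancel₀ hp.ne', NNReal.rpow_one,
    NNReal.mul_rpow, ← NNReal.rpow_mul] at h2
  have hexp : (p⁻¹ - 1) * p = 1 - p := by field_simp
  rw [hexp] at h2
  have h3 := NNReal.coe_le_coe.2 h2
  push_cast [NNReal.coe_rpow] at h3
  simpa [a, b, Real.coe_toNNReal x hx, Real.coe_toNNReal y hy] using h3

/-- For the Kac collision rotation `v' = v cos θ - v⋆ sin θ`, `v⋆' = v sin θ + v⋆ cos θ`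
and `0 < s ≤ 1`, the ratio `(⟨v⋆⟩^{2s}+⟨v⟩^{2s})/(⟨v⋆'⟩^{2s}+⟨v'⟩^{2s})` lies in
`[2^{s-1}, 2^{1-s}]`, and equals `1` when `s = 1`. -/
theorem kac_bracket_ratio (s θ v vs v' vs' : ℝ) (hs0 : 0 < s) (hs1 : s ≤ 1)
    (hv' : v' = v * Real.cos θ - vs * Real.sin θ)
    (hvs' : vs' = v * Real.sin θ + vs * Real.cos θ) :
    (2 : ℝ) ^ (s - 1) ≤
        ((1 + vs ^ 2) ^ s + (1 + v ^ 2) ^ s) / ((1 + vs' ^ 2) ^ s + (1 + v' ^ 2) ^ s) ∧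
    ((1 + vs ^ 2) ^ s + (1 + v ^ 2) ^ s) / ((1 + vs' ^ 2) ^ s + (1 + v' ^ 2) ^ s) ≤
        (2 : ℝ) ^ (1 - s) ∧
    (s = 1 →
      ((1 + vs ^ 2) ^ s + (1 + v ^ 2) ^ s) / ((1 + vs' ^ 2) ^ s + (1 + v' ^ 2) ^ s) = 1) := by
  have hpyth := Real.sin_sq_add_cos_sq θ
  have henergy : v' ^ 2 + vs' ^ 2 = v ^ 2 + vs ^ 2 := by
    subst hv' hvs'; nlinarith [hpyth]
  set a : ℝ := 1 + v ^ 2 with ha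
  set b : ℝ := 1 + vs ^ 2 with hb
  set a' : ℝ := 1 + v' ^ 2 with ha'
  set b' : ℝ := 1 + vs' ^ 2 with hb'
  have haT : a' + b' = a + b := by rw [ha, hb, ha', hb']; nlinarith [henergy]
  have ha0 : (0 : ℝ) ≤ a := by positivity
  have hb0 : (0 : ℝ) ≤ b := by positivity
  have ha'0 : (0 : ℝ) ≤ a' := by positivity
  have hb'0 : (0 : ℝ) ≤ b' := by positivity
  set T : ℝ := a + b with hT
  have hT0 : (0 : ℝ) < T := by rw [hT, ha, hb]; positivity
  have hTs0 : (0 : ℝ) < T ^ s := Real.rpow_pos_of_pos hT0 s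
  -- bounds for numerator N = b^s + a^s and denominator D = b'^s + a'^s
  have hN1 : T ^ s ≤ b ^ s + a ^ s := by
    have := real_rpow_add_le_add_rpow b a hb0 ha0 hs0.le hs1
    rw [hT, add_comm a b]; linarith
  have hN2 : b ^ s + a ^ s ≤ (2 : ℝ) ^ (1 - s) * T ^ s := by
    have := real_add_rpow_le_mul_rpow b a hb0 ha0 hs0 hs1
    rw [hT]
    calc b ^ s + a ^ s ≤ (2 : ℝ) ^ (1 - s) * (b + a) ^ s := this
      _ = (2 : ℝ) ^ (1 - s) * (a + b) ^ s := by ring_nf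
  have hD1 : T ^ s ≤ b' ^ s + a' ^ s := by
    have := real_rpow_add_le_add_rpow b' a' hb'0 ha'0 hs0.le hs1
    have hba : b' + a' = T := by rw [hT]; linarith [haT]
    rw [hba] at this; linarith
  have hD2 : b' ^ s + a' ^ s ≤ (2 : ℝ) ^ (1 - s) * T ^ s := by
    have := real_add_rpow_le_mul_rpow b' a' hb'0 ha'0 hs0 hs1
    have hba : b' + a' = T := by rw [hT]; linarith [haT]
    rw [hba] at this; exact this
  have hD0 : (0 : ℝ) < b' ^ s + a' ^ s := lt_of_lt_of_le hTs0 hD1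
  have h2pos : (0 : ℝ) < (2 : ℝ) ^ (s - 1) := Real.rpow_pos_of_pos two_pos _
  have h2mul : (2 : ℝ) ^ (s - 1) * (2 : ℝ) ^ (1 - s) = 1 := by
    rw [← Real.rpow_add two_pos]; norm_num
  refine ⟨?_, ?_, ?_⟩
  · rw [le_div_iff₀ hD0]
    calc (2 : ℝ) ^ (s - 1) * (b' ^ s + a' ^ s)
        ≤ (2 : ℝ) ^ (s - 1) * ((2 : ℝ) ^ (1 - s) * T ^ s) := by
          exact mul_le_mul_of_nonneg_left hD2 h2pos.le
      _ = T ^ s := by rw [← mul_assoc, h2mul, one_mul]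
      _ ≤ b ^ s + a ^ s := hN1
  · rw [div_le_iff₀ hD0]
    calc b ^ s + a ^ s ≤ (2 : ℝ) ^ (1 - s) * T ^ s := hN2
      _ ≤ (2 : ℝ) ^ (1 - s) * (b' ^ s + a' ^ s) := by
          exact mul_le_mul_of_nonneg_left hD1 (Real.rpow_pos_of_pos two_pos _).le
  · intro hs
    subst hs
    rw [Real.rpow_one, Real.rpow_one, Real.rpow_one, Real.rpow_one]
    have : b' + a' = b + a := by linarith [haT]
    rw [this, div_self]
    have : (0 : ℝ) < b + a := by rw [hb, ha]; positivity
    linarith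
end

section
/- For every α > 0 there exist constants c, C > 0 (depending only on α) such that for all t > 0 and all ξ, η ∈ ℝ^n, c · t(1 + |ξ|^α + t^α |η|^α) ≤ ∫₀ᵗ (1 + |ξ + ρη|²)^{α/2} dρ ≤ C · t(1 + |ξ|^α + t^α |η|^α). -/
open MeasureTheory

lemma kie_sq_rpow_half {x α : ℝ} (hx : 0 ≤ x) : (x ^ 2) ^ (α / 2) = x ^ α := by
  rw [← Real.rpow_natCast x 2, ← Real.rpow_mul hx]
  norm_num
  rw [show 2 * (α / 2) = α by ring]

set_option maxHeartbeats 1000000 in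
/-- For every `α > 0` there are `c, C > 0` such that for all `t > 0` and `ξ, η ∈ ℝⁿ`,
`c·t(1+|ξ|^α+t^α|η|^α) ≤ ∫₀ᵗ (1+|ξ+ρη|²)^{α/2} dρ ≤ C·t(1+|ξ|^α+t^α|η|^α)`. -/
theorem kolmogorov_integral_equiv (n : ℕ) (α : ℝ) (hα : 0 < α) :
    ∃ c C : ℝ, 0 < c ∧ 0 < C ∧
      ∀ (t : ℝ), 0 < t → ∀ ξ η : EuclideanSpace ℝ (Fin n),
        c * (t * (1 + ‖ξ‖ ^ α + t ^ α * ‖η‖ ^ α)) ≤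
          (∫ ρ in (0 : ℝ)..t, (1 + ‖ξ + ρ • η‖ ^ 2) ^ (α / 2)) ∧
        (∫ ρ in (0 : ℝ)..t, (1 + ‖ξ + ρ • η‖ ^ 2) ^ (α / 2)) ≤
          C * (t * (1 + ‖ξ‖ ^ α + t ^ α * ‖η‖ ^ α)) := by
  have hα2 : (0:ℝ) ≤ α / 2 := by positivity
  refine ⟨1 / (6 * 8 ^ α), 5 ^ (α / 2), by positivity, by positivity, ?_⟩
  intro t ht ξ η
  set f : ℝ → ℝ := fun ρ => (1 + ‖ξ + ρ • η‖ ^ 2) ^ (α / 2) with hf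
  have hcont : Continuous f := by
    apply Continuous.rpow_const
    · continuity
    · intro x; left; positivity
  have hint : ∀ u v : ℝ, IntervalIntegrable f volume u v := fun u v =>
    hcont.intervalIntegrable u v
  set I := ∫ ρ in (0:ℝ)..t, f ρ with hI
  set a := ‖ξ‖ with ha
  have ha0 : 0 ≤ a := norm_nonneg _
  have hη0 : (0:ℝ) ≤ ‖η‖ := norm_nonneg _
  set A := ‖ξ‖ ^ α with hA
  set B := t ^ α * ‖η‖ ^ α with hB
  have hA0 : 0 ≤ A := Real.rpow_nonneg ha0 α
  have hB0 : 0 ≤ B := mul_nonneg (Real.rpow_nonneg ht.le α) (Real.rpow_nonneg hη0 α)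
  -- pointwise lower bound by norm^α
  have hlow : ∀ ρ : ℝ, ‖ξ + ρ • η‖ ^ α ≤ f ρ := by
    intro ρ
    rw [hf, ← kie_sq_rpow_half (norm_nonneg (ξ + ρ • η))]
    exact Real.rpow_le_rpow (sq_nonneg _) (by linarith [sq_nonneg ‖ξ + ρ • η‖]) hα2
  have hone : ∀ ρ : ℝ, (1:ℝ) ≤ f ρ := by
    intro ρ
    rw [hf]
    calc (1:ℝ) = 1 ^ (α/2) := (Real.one_rpow _).symm
    _ ≤ _ := Real.rpow_le_rpow zero_le_one (by linarith [sq_nonneg ‖ξ + ρ • η‖]) hα2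
  -- H1 : t ≤ I
  have H1 : t ≤ I := by
    calc t = ∫ _ρ in (0:ℝ)..t, (1:ℝ) := by simp
    _ ≤ I := intervalIntegral.integral_mono_on ht.le (intervalIntegrable_const) (hint 0 t)
        (fun x _ => hone x)
  have hI0 : 0 < I := lt_of_lt_of_le ht H1
  -- HB : I ≥ t * B / (2 * 4 ^ α)
  have hshiftcont : Continuous fun ρ : ℝ => f (ρ + t / 2) :=
    hcont.comp (by continuity)
  have split : I = (∫ ρ in (0:ℝ)..(t/2), f ρ) + ∫ ρ in (t/2)..t, f ρ :=
    (intervalIntegral.integral_add_adjacent_intervals (hint 0 (t/2)) (hint (t/2) t)).symm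
  have shift : (∫ ρ in (t/2)..t, f ρ) = ∫ ρ in (0:ℝ)..(t/2), f (ρ + t/2) := by
    rw [intervalIntegral.integral_comp_add_right f (t/2)]
    congr 1 <;> ring
  have sum_eq : I = ∫ ρ in (0:ℝ)..(t/2), (f ρ + f (ρ + t/2)) := by
    rw [split, shift,
      intervalIntegral.integral_add (hint 0 (t/2)) (hshiftcont.intervalIntegrable 0 (t/2))]
  have hpt : ∀ ρ : ℝ, (t / 4 * ‖η‖) ^ α ≤ f ρ + f (ρ + t/2) := by
    intro ρ
    have hd : t / 2 * ‖η‖ ≤ ‖ξ + ρ • η‖ + ‖ξ + (ρ + t/2) • η‖ := by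
      have he : (ξ + (ρ + t/2) • η) - (ξ + ρ • η) = (t/2) • η := by
        rw [add_smul]; abel
      calc t / 2 * ‖η‖ = ‖(t/2) • η‖ := by
            rw [norm_smul, Real.norm_eq_abs, abs_of_nonneg (by linarith)]
      _ = ‖(ξ + (ρ + t/2) • η) - (ξ + ρ • η)‖ := by rw [he]
      _ ≤ _ := by
          rw [add_comm (‖ξ + ρ • η‖)]
          exact norm_sub_le _ _
    have hmax : t / 4 * ‖η‖ ≤ max ‖ξ + ρ • η‖ ‖ξ + (ρ + t/2) • η‖ := by
      rcases max_cases ‖ξ + ρ • η‖ ‖ξ + (ρ + t/2) • η‖ with ⟨h1, h2⟩ | ⟨h1, h2⟩ <;>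
        rw [h1] <;> nlinarith
    have hmm : (t / 4 * ‖η‖) ^ α ≤ (max ‖ξ + ρ • η‖ ‖ξ + (ρ + t/2) • η‖) ^ α :=
      Real.rpow_le_rpow (by positivity) hmax hα.le
    rcases max_cases ‖ξ + ρ • η‖ ‖ξ + (ρ + t/2) • η‖ with ⟨h1, _⟩ | ⟨h1, _⟩ <;>
      rw [h1] at hmm
    · calc (t / 4 * ‖η‖) ^ α ≤ ‖ξ + ρ • η‖ ^ α := hmm
      _ ≤ f ρ := hlow ρ
      _ ≤ f ρ + f (ρ + t/2) := by linarith [hone (ρ + t/2)]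
    · calc (t / 4 * ‖η‖) ^ α ≤ ‖ξ + (ρ + t/2) • η‖ ^ α := hmm
      _ ≤ f (ρ + t/2) := hlow _
      _ ≤ f ρ + f (ρ + t/2) := by linarith [hone ρ]
  have HB : t / 2 * (t / 4 * ‖η‖) ^ α ≤ I := by
    rw [sum_eq]
    calc t / 2 * (t / 4 * ‖η‖) ^ α
        = ∫ _ρ in (0:ℝ)..(t/2), (t / 4 * ‖η‖) ^ α := by
          rw [intervalIntegral.integral_const]; simp [smul_eq_mul]
    _ ≤ _ := intervalIntegral.integral_mono_on (by linarith) intervalIntegrable_const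
        ((hint 0 (t/2)).add (hshiftcont.intervalIntegrable 0 (t/2))) (fun x _ => hpt x)
  have hBrw : (t / 4 * ‖η‖) ^ α = t ^ α / 4 ^ α * ‖η‖ ^ α := by
    rw [Real.mul_rpow (by positivity) hη0, Real.div_rpow ht.le (by norm_num)]
  have h2α : (0:ℝ) < 2 ^ α := by positivity
  have h4α : (0:ℝ) < 4 ^ α := by positivity
  have h8α : (0:ℝ) < 8 ^ α := by positivity
  have HB' : t * B / (2 * 4 ^ α) ≤ I := by
    calc t * B / (2 * 4 ^ α) = t / 2 * (t ^ α / 4 ^ α * ‖η‖ ^ α) := by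
          rw [hB]; field_simp; try ring
    _ = t / 2 * (t / 4 * ‖η‖) ^ α := by rw [hBrw]
    _ ≤ I := HB
  -- HA : I ≥ t * A / (2 * 8 ^ α)
  have h2_8 : (2:ℝ) ^ α * 4 ^ α = 8 ^ α := by
    rw [← Real.mul_rpow (by norm_num) (by norm_num)]; norm_num
  have HA : t * A / (2 * 8 ^ α) ≤ I := by
    rcases le_or_gt a (2 * (t * ‖η‖)) with hcase | hcase
    · -- a ≤ 2 t ‖η‖ : use HB'
      have hAle : A ≤ 2 ^ α * B := by
        calc A ≤ (2 * (t * ‖η‖)) ^ α := Real.rpow_le_rpow ha0 hcase hα.le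
        _ = 2 ^ α * (t ^ α * ‖η‖ ^ α) := by
            rw [Real.mul_rpow (by norm_num) (by positivity),
              Real.mul_rpow ht.le hη0]
        _ = 2 ^ α * B := by rw [hB]
      calc t * A / (2 * 8 ^ α) ≤ t * (2 ^ α * B) / (2 * 8 ^ α) := by
            gcongr
      _ = t * B / (2 * 4 ^ α) := by
            rw [← h2_8]; field_simp
      _ ≤ I := HB'
    · -- a > 2 t ‖η‖ : pointwise bound f ρ ≥ (a/2)^α
      have hpt2 : ∀ ρ ∈ Set.Icc (0:ℝ) t, (a / 2) ^ α ≤ f ρ := by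
        intro ρ hρ
        have h1 : a - ρ * ‖η‖ ≤ ‖ξ + ρ • η‖ := by
          have hne : a ≤ ‖ξ + ρ • η‖ + ‖ρ • η‖ := by
            calc a = ‖(ξ + ρ • η) - ρ • η‖ := by rw [add_sub_cancel_right]
            _ ≤ _ := norm_sub_le _ _
          rw [norm_smul, Real.norm_eq_abs, abs_of_nonneg hρ.1] at hne
          linarith
        have h2 : ρ * ‖η‖ ≤ t * ‖η‖ := mul_le_mul_of_nonneg_right hρ.2 hη0
        have h3 : a / 2 ≤ ‖ξ + ρ • η‖ := by nlinarith
        calc (a / 2) ^ α ≤ ‖ξ + ρ • η‖ ^ α := Real.rpow_le_rpow (by positivity) h3 hα.le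
        _ ≤ f ρ := hlow ρ
      have hta : t * (a / 2) ^ α ≤ I := by
        calc t * (a / 2) ^ α = ∫ _ρ in (0:ℝ)..t, (a/2) ^ α := by
              rw [intervalIntegral.integral_const]; simp [smul_eq_mul]
        _ ≤ I := intervalIntegral.integral_mono_on ht.le intervalIntegrable_const
            (hint 0 t) hpt2
      have harw : (a / 2) ^ α = A / 2 ^ α := by
        rw [Real.div_rpow ha0 (by norm_num), hA]
      have h28 : (2:ℝ) ^ α ≤ 2 * 8 ^ α := by
        nlinarith [Real.rpow_le_rpow (x := (2:ℝ)) (by norm_num) (by norm_num : (2:ℝ) ≤ 8) hα.le,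
          Real.one_le_rpow (by norm_num : (1:ℝ) ≤ 2) hα.le]
      calc t * A / (2 * 8 ^ α) ≤ t * A / 2 ^ α := by
            gcongr
      _ = t * (a / 2) ^ α := by rw [harw]; ring
      _ ≤ I := hta
  constructor
  · -- lower bound
    have h48 : (4:ℝ) ^ α ≤ 8 ^ α :=
      Real.rpow_le_rpow (by norm_num) (by norm_num) hα.le
    have h18 : (1:ℝ) ≤ 8 ^ α := Real.one_le_rpow (by norm_num) hα.le
    rw [div_mul_eq_mul_div, one_mul, div_le_iff₀ (by positivity)]
    have e1 : t * A ≤ I * (2 * 8 ^ α) := by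
      rw [div_le_iff₀ (by positivity)] at HA; linarith
    have e2 : t * B ≤ I * (2 * 4 ^ α) := by
      rw [div_le_iff₀ (by positivity)] at HB'; linarith
    have k1 : t ≤ I * (2 * 8 ^ α) := by
      calc t ≤ I := H1
      _ ≤ I * (2 * 8 ^ α) := le_mul_of_one_le_right hI0.le (by nlinarith)
    have k2 : t * B ≤ I * (2 * 8 ^ α) := by
      calc t * B ≤ I * (2 * 4 ^ α) := e2
      _ ≤ I * (2 * 8 ^ α) := by
          apply mul_le_mul_of_nonneg_left (by linarith) hI0.le
    have expand : t * (1 + A + B) = t + t * A + t * B := by ring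
    rw [expand]
    linarith
  · -- upper bound
    set M := max 1 (max a (t * ‖η‖)) with hM
    have hM1 : (1:ℝ) ≤ M := le_max_left _ _
    have hMa : a ≤ M := le_trans (le_max_left _ _) (le_max_right _ _)
    have hMb : t * ‖η‖ ≤ M := le_trans (le_max_right _ _) (le_max_right _ _)
    have hM0 : (0:ℝ) < M := lt_of_lt_of_le one_pos hM1
    have hMα : M ^ α ≤ 1 + A + B := by
      have hBrw2 : (t * ‖η‖) ^ α = B := by
        rw [Real.mul_rpow ht.le hη0, hB]
      rcases max_cases (1:ℝ) (max a (t * ‖η‖)) with ⟨h1, _⟩ | ⟨h1, _⟩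
      · rw [hM, h1, Real.one_rpow]; linarith
      · rcases max_cases a (t * ‖η‖) with ⟨h2, _⟩ | ⟨h2, _⟩
        · rw [hM, h1, h2, ← hA]; linarith
        · rw [hM, h1, h2, hBrw2]; linarith
    have hup : ∀ ρ ∈ Set.Icc (0:ℝ) t, f ρ ≤ 5 ^ (α/2) * M ^ α := by
      intro ρ hρ
      have hg : ‖ξ + ρ • η‖ ≤ a + t * ‖η‖ := by
        calc ‖ξ + ρ • η‖ ≤ a + ‖ρ • η‖ := norm_add_le _ _
        _ = a + ρ * ‖η‖ := by rw [norm_smul, Real.norm_eq_abs, abs_of_nonneg hρ.1]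
        _ ≤ a + t * ‖η‖ := by nlinarith [hρ.2]
      have hsq : 1 + ‖ξ + ρ • η‖ ^ 2 ≤ 5 * M ^ 2 := by
        nlinarith [mul_self_le_mul_self (norm_nonneg (ξ + ρ • η)) hg,
          sq_nonneg (a + t * ‖η‖ - 2 * M), norm_nonneg (ξ + ρ • η)]
      calc f ρ ≤ (5 * M ^ 2) ^ (α/2) := Real.rpow_le_rpow (by positivity) hsq hα2
      _ = 5 ^ (α/2) * (M^2) ^ (α/2) := Real.mul_rpow (by norm_num) (by positivity)
      _ = 5 ^ (α/2) * M ^ α := by rw [kie_sq_rpow_half hM0.le]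
    have htM : t * M ^ α ≤ t * (1 + A + B) := mul_le_mul_of_nonneg_left hMα ht.le
    calc I ≤ ∫ _ρ in (0:ℝ)..t, 5 ^ (α/2) * M ^ α :=
          intervalIntegral.integral_mono_on ht.le (hint 0 t) intervalIntegrable_const hup
    _ = t * (5 ^ (α/2) * M ^ α) := by
          rw [intervalIntegral.integral_const]; simp [smul_eq_mul]
    _ = 5 ^ (α/2) * (t * M ^ α) := by ring
    _ ≤ 5 ^ (α/2) * (t * (1 + A + B)) :=
          mul_le_mul_of_nonneg_left htM (by positivity)
end

section
/- Fix θ ∈ (0, π/2). For ξ₁, ξ₂ ∈ ℝ, the double integral ∬_{ℝ²} e^{−(v sin θ + v* cos θ)²/4} e^{−i(vξ₁ + v*ξ₂)} dv dv*, interpreted as a tempered distribution in (ξ₁, ξ₂), equals 2π√(4π) · e^{−(ξ₁ sin θ + ξ₂ cos θ)²} · δ(−ξ₁ cos θ + ξ₂ sin θ), where δ is the one-dimensional Dirac measure. -/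
open MeasureTheory Real Complex

open MeasureTheory Real Complex FourierTransform SchwartzMap
open scoped RealInnerProductSpace

noncomputable section DGFAux

private lemma dgf_inner_eq (v w : ℂ) : (inner ℝ v w : ℝ) = v.re * w.re + v.im * w.im := by
  rw [Complex.inner]
  simp [Complex.mul_re]
  ring

private lemma dgf_phase_norm (t : ℝ) : ‖Complex.exp (-Complex.I * t)‖ = 1 := by
  simp [Complex.norm_exp]

private lemma dgf_sep_bound (f : SchwartzMap ℂ ℂ) :
    ∃ C : ℝ, 0 ≤ C ∧ ∀ x : ℂ, ‖f x‖ ≤ C / ((1 + x.re ^ 2) * (1 + x.im ^ 2)) := by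
  obtain ⟨C₀, h₀⟩ := f.decay' 0 0
  obtain ⟨C₂, h₂⟩ := f.decay' 2 0
  obtain ⟨C₄, h₄⟩ := f.decay' 4 0
  simp only [norm_iteratedFDeriv_zero] at h₀ h₂ h₄
  replace h₀ : ∀ x : ℂ, ‖x‖ ^ 0 * ‖f x‖ ≤ C₀ := h₀
  replace h₂ : ∀ x : ℂ, ‖x‖ ^ 2 * ‖f x‖ ≤ C₂ := h₂
  replace h₄ : ∀ x : ℂ, ‖x‖ ^ 4 * ‖f x‖ ≤ C₄ := h₄
  have hC₀ : 0 ≤ C₀ := by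
    have h := h₀ 0; simp only [pow_zero, one_mul] at h; exact le_trans (norm_nonneg _) h
  have hC₂ : 0 ≤ C₂ := by have h := h₂ 0; simpa using h
  have hC₄ : 0 ≤ C₄ := by have h := h₄ 0; simpa using h
  refine ⟨C₀ + 2 * C₂ + C₄, by positivity, fun x ↦ ?_⟩
  have hx : ‖x‖ ^ 2 = x.re ^ 2 + x.im ^ 2 := by
    rw [Complex.sq_norm, Complex.normSq_apply]; ring
  have hd : (0:ℝ) < (1 + x.re ^ 2) * (1 + x.im ^ 2) := by positivity
  rw [le_div_iff₀ hd]
  have e0 := h₀ x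
  have e2 := h₂ x
  have e4 := h₄ x
  simp only [pow_zero, one_mul] at e0
  have h4' : (x.re ^ 2 + x.im ^ 2) ^ 2 * ‖f x‖ ≤ C₄ := by
    calc (x.re ^ 2 + x.im ^ 2) ^ 2 * ‖f x‖ = ‖x‖ ^ 4 * ‖f x‖ := by rw [← hx]; ring
      _ ≤ C₄ := e4
  have h2' : (x.re ^ 2 + x.im ^ 2) * ‖f x‖ ≤ C₂ := by
    calc (x.re ^ 2 + x.im ^ 2) * ‖f x‖ = ‖x‖ ^ 2 * ‖f x‖ := by rw [← hx]
      _ ≤ C₂ := e2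
  have h1 : x.re ^ 2 * x.im ^ 2 ≤ (x.re ^ 2 + x.im ^ 2) ^ 2 := by
    nlinarith [sq_nonneg (x.re ^ 2 - x.im ^ 2), sq_nonneg (x.re * x.im)]
  have hre := mul_le_mul_of_nonneg_right h1 (norm_nonneg (f x))
  calc ‖f x‖ * ((1 + x.re ^ 2) * (1 + x.im ^ 2))
      = ‖f x‖ + (x.re ^ 2 + x.im ^ 2) * ‖f x‖ + x.re ^ 2 * x.im ^ 2 * ‖f x‖ := by ring
    _ ≤ C₀ + C₂ + C₄ := by nlinarith [e0, h2', h4', hre]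
    _ ≤ C₀ + 2 * C₂ + C₄ := by linarith

private lemma dgf_line_integrable_re (f : SchwartzMap ℂ ℂ) (σ : ℝ) :
    Integrable (fun u : ℝ ↦ f (u + σ * Complex.I)) := by
  obtain ⟨C, hC0, hC⟩ := dgf_sep_bound f
  refine Integrable.mono' ((integrable_inv_one_add_sq).const_mul C)
    ((f.continuous.comp (by continuity)).aestronglyMeasurable)
    (Filter.Eventually.of_forall fun u ↦ ?_)
  have h := hC (u + σ * Complex.I)
  simp only [Complex.add_re, Complex.ofReal_re, Complex.mul_re, Complex.I_re, Complex.I_im,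
    Complex.ofReal_im, Complex.add_im, Complex.mul_im] at h
  have h' : ‖f (↑u + ↑σ * Complex.I)‖ ≤ C / ((1 + u ^ 2) * (1 + σ ^ 2)) := by
    convert h using 3 <;> ring
  refine h'.trans ?_
  rw [← div_eq_mul_inv]
  gcongr
  nlinarith [sq_nonneg σ, sq_nonneg u]

private lemma dgf_line_integrable_im (f : SchwartzMap ℂ ℂ) (a : ℝ) :
    Integrable (fun t : ℝ ↦ f (a + t * Complex.I)) := by
  obtain ⟨C, hC0, hC⟩ := dgf_sep_bound f
  refine Integrable.mono' ((integrable_inv_one_add_sq).const_mul C)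
    ((f.continuous.comp (by continuity)).aestronglyMeasurable)
    (Filter.Eventually.of_forall fun t ↦ ?_)
  have h := hC (a + t * Complex.I)
  simp only [Complex.add_re, Complex.ofReal_re, Complex.mul_re, Complex.I_re, Complex.I_im,
    Complex.ofReal_im, Complex.add_im, Complex.mul_im] at h
  have h' : ‖f (↑a + ↑t * Complex.I)‖ ≤ C / ((1 + a ^ 2) * (1 + t ^ 2)) := by
    convert h using 3 <;> ring
  refine h'.trans ?_
  rw [← div_eq_mul_inv]
  gcongr
  nlinarith [sq_nonneg a, sq_nonneg t]

/-- transfer an integral over ℂ to an iterated integral -/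
private lemma dgf_complex_to_iterated (F : ℂ → ℂ) (hF : Integrable F) :
    ∫ x : ℂ, F x = ∫ u : ℝ, ∫ σ : ℝ, F (u + σ * Complex.I) := by
  rw [← (Complex.volume_preserving_equiv_real_prod.symm).integral_comp
    (Complex.measurableEquivRealProd.symm.measurableEmbedding) F]
  have hI : Integrable (fun p : ℝ × ℝ ↦ F (p.1 + p.2 * Complex.I)) :=
    ((Complex.volume_preserving_equiv_real_prod.symm).integrable_comp_emb
      (Complex.measurableEquivRealProd.symm.measurableEmbedding)).2 hF |>.congr
      (Filter.Eventually.of_forall fun p ↦ by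
        simp [Function.comp, Complex.measurableEquivRealProd_symm_apply, Complex.mk_eq_add_mul_I])
  have hI2 : Integrable (fun p : ℝ × ℝ ↦ F (p.1 + p.2 * Complex.I))
      ((volume : Measure ℝ).prod volume) := by rwa [← Measure.volume_eq_prod]
  have h2 := MeasureTheory.integral_integral (f := fun u σ : ℝ ↦ F (u + σ * Complex.I)) hI2
  simp only [← Measure.volume_eq_prod] at h2
  rw [h2]
  congr 1
  ext p
  simp [Complex.measurableEquivRealProd_symm_apply, Complex.mk_eq_add_mul_I]

private lemma dgf_integrable_prod_phase (f : SchwartzMap ℂ ℂ) (g : ℝ × ℝ → ℝ) (hg : Continuous g) :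
    Integrable (fun p : ℝ × ℝ ↦ f (p.1 + p.2 * Complex.I) * Complex.exp (-Complex.I * (g p))) := by
  have hbase : Integrable (fun p : ℝ × ℝ ↦ f (p.1 + p.2 * Complex.I)) := by
    refine ((Complex.volume_preserving_equiv_real_prod.symm).integrable_comp_emb
      (Complex.measurableEquivRealProd.symm.measurableEmbedding)).2 f.integrable |>.congr
      (Filter.Eventually.of_forall fun p ↦ ?_)
    simp [Function.comp, Complex.measurableEquivRealProd_symm_apply, Complex.mk_eq_add_mul_I]
  have := hbase.bdd_mul (f := fun p : ℝ × ℝ ↦ Complex.exp (-Complex.I * (g p)))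
    ((Complex.continuous_exp.comp (by continuity)).aestronglyMeasurable)
    (Filter.Eventually.of_forall fun p ↦ le_of_eq (dgf_phase_norm (g p)))
  exact this.congr (Filter.Eventually.of_forall fun p ↦ mul_comm _ _)

end DGFAux

noncomputable section DGFDefs
open MeasureTheory Real Complex FourierTransform SchwartzMap

private def dgfW (θ : ℝ) : Circle := Circle.exp (Real.pi / 2 - θ)
private def dgfW₂ (θ : ℝ) : Circle := Circle.exp (θ - Real.pi / 2)

private lemma dgfW_coe (θ : ℝ) : (dgfW θ : ℂ) = Real.sin θ + Real.cos θ * Complex.I := by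
  rw [dgfW, Circle.coe_exp, Complex.exp_mul_I, ← Complex.ofReal_cos, ← Complex.ofReal_sin,
    Real.cos_pi_div_two_sub, Real.sin_pi_div_two_sub]

private lemma dgfW₂_coe (θ : ℝ) : (dgfW₂ θ : ℂ) = Real.sin θ - Real.cos θ * Complex.I := by
  have h : θ - Real.pi / 2 = -(Real.pi / 2 - θ) := by ring
  rw [dgfW₂, h, Circle.coe_exp, Complex.exp_mul_I, ← Complex.ofReal_cos, ← Complex.ofReal_sin,
    Real.cos_neg, Real.sin_neg, Real.cos_pi_div_two_sub, Real.sin_pi_div_two_sub]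
  push_cast
  ring

private def dgfT (θ : ℝ) : ℂ ≃L[ℝ] ℝ × ℝ :=
  (rotation (dgfW θ)).toContinuousLinearEquiv.trans Complex.equivRealProdCLM

private def dgfPhi (θ : ℝ) (φ : SchwartzMap (ℝ × ℝ) ℂ) : SchwartzMap ℂ ℂ :=
  SchwartzMap.compCLMOfContinuousLinearEquiv ℂ (dgfT θ) φ

private lemma dgfPhi_apply (θ : ℝ) (φ : SchwartzMap (ℝ × ℝ) ℂ) (x : ℂ) :
    dgfPhi θ φ x = φ (((dgfW θ : ℂ) * x).re, ((dgfW θ : ℂ) * x).im) := rfl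

private def dgfPsi (θ : ℝ) (φ : SchwartzMap (ℝ × ℝ) ℂ) : SchwartzMap ℂ ℂ :=
  SchwartzMap.fourierTransformCLM ℂ (dgfPhi θ φ)

end DGFDefs

noncomputable section DGFPsiEq
open MeasureTheory Real Complex FourierTransform SchwartzMap

private lemma dgf_re (u σ : ℝ) : ((u : ℂ) + σ * Complex.I).re = u := by simp
private lemma dgf_im (u σ : ℝ) : ((u : ℂ) + σ * Complex.I).im = σ := by simp

private lemma dgf_integrable_phase (f : SchwartzMap ℂ ℂ) (g : ℂ → ℝ) (hg : Continuous g) :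
    Integrable (fun x : ℂ ↦ f x * Complex.exp (-Complex.I * (g x))) := by
  have h := (f.integrable (μ := volume)).bdd_mul
    (f := fun x : ℂ ↦ Complex.exp (-Complex.I * (g x)))
    ((Complex.continuous_exp.comp (by continuity)).aestronglyMeasurable)
    (Filter.Eventually.of_forall fun x ↦ le_of_eq (dgf_phase_norm (g x)))
  exact h.congr (Filter.Eventually.of_forall fun x ↦ mul_comm _ _)

private lemma dgfPsi_eq (θ : ℝ) (φ : SchwartzMap (ℝ × ℝ) ℂ) (y z : ℝ) :
    dgfPsi θ φ ((y / (2 * Real.pi) : ℝ) + (z / (2 * Real.pi) : ℝ) * Complex.I) =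
      ∫ u : ℝ, ∫ σ : ℝ,
        dgfPhi θ φ (u + σ * Complex.I) * Complex.exp (-Complex.I * (y * u + z * σ)) := by
  set ζ : ℂ := (y / (2 * Real.pi) : ℝ) + (z / (2 * Real.pi) : ℝ) * Complex.I with hζ
  have hζre : ζ.re = y / (2 * Real.pi) := dgf_re _ _
  have hζim : ζ.im = z / (2 * Real.pi) := dgf_im _ _
  have hπ : (Real.pi : ℝ) ≠ 0 := Real.pi_ne_zero
  set G : ℂ → ℂ := fun x ↦ dgfPhi θ φ x *
    Complex.exp (-Complex.I * ((y * x.re + z * x.im : ℝ) : ℂ)) with hG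
  have hGint : Integrable G volume :=
    dgf_integrable_phase (dgfPhi θ φ) (fun x ↦ y * x.re + z * x.im) (by continuity)
  calc dgfPsi θ φ ζ = ∫ x : ℂ, G x := by
        rw [show dgfPsi θ φ ζ = 𝓕 (⇑(dgfPhi θ φ)) ζ from by
          rw [dgfPsi, SchwartzMap.fourierTransformCLM_apply, SchwartzMap.fourier_coe]]
        rw [Real.fourier_eq']
        congr 1
        ext x
        rw [smul_eq_mul, mul_comm, hG]
        congr 2
        have hr : (-2 * Real.pi * (inner ℝ x ζ : ℝ) : ℝ) = -(y * x.re + z * x.im) := by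
          rw [dgf_inner_eq, hζre, hζim]
          field_simp
        rw [hr]
        push_cast
        ring
    _ = ∫ u : ℝ, ∫ σ : ℝ, G (u + σ * Complex.I) := dgf_complex_to_iterated G hGint
    _ = _ := by
        rw [hG]
        simp only [dgf_re, dgf_im, Complex.ofReal_add, Complex.ofReal_mul]

end DGFPsiEq

noncomputable section DGFInner
open MeasureTheory Real Complex FourierTransform SchwartzMap

private lemma dgf_rotation_integral (a : Circle) (F : ℂ → ℂ) :
    ∫ x : ℂ, F ((a : ℂ) * x) = ∫ x : ℂ, F x := by
  have h := (rotation a).measurePreserving.integral_comp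
    ((rotation a).toHomeomorph.measurableEmbedding) F
  simpa [rotation_apply] using h

private lemma dgf_inner_integral (θ : ℝ) (φ : SchwartzMap (ℝ × ℝ) ℂ) (v vs : ℝ) :
    (∫ ξ₁ : ℝ, ∫ ξ₂ : ℝ, φ (ξ₁, ξ₂) * Complex.exp (-Complex.I * (v * ξ₁ + vs * ξ₂))) =
      ∫ u : ℝ, ∫ σ : ℝ, dgfPhi θ φ (u + σ * Complex.I) *
        Complex.exp (-Complex.I * ((v * Real.sin θ + vs * Real.cos θ) * u +
          (-v * Real.cos θ + vs * Real.sin θ) * σ)) := by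
  set s := Real.sin θ with hs
  set c := Real.cos θ with hc
  set F₀ : ℂ → ℂ := fun x ↦ φ (x.re, x.im) *
    Complex.exp (-Complex.I * ((v * x.re + vs * x.im : ℝ) : ℂ)) with hF₀
  have hφint : Integrable (fun x : ℂ ↦ φ (x.re, x.im)) volume := by
    have h := ((Complex.volume_preserving_equiv_real_prod).integrable_comp_emb
      (Complex.measurableEquivRealProd.measurableEmbedding)).2 (φ.integrable (μ := volume))
    exact h.congr (Filter.Eventually.of_forall fun x ↦ by
      simp [Function.comp, Complex.measurableEquivRealProd_apply])
  have hF₀int : Integrable F₀ volume := by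
    have h := hφint.bdd_mul
      (f := fun x : ℂ ↦ Complex.exp (-Complex.I * ((v * x.re + vs * x.im : ℝ) : ℂ)))
      ((Complex.continuous_exp.comp (by continuity)).aestronglyMeasurable)
      (Filter.Eventually.of_forall fun x ↦ le_of_eq (dgf_phase_norm _))
    exact h.congr (Filter.Eventually.of_forall fun x ↦ mul_comm _ _)
  have step1 : (∫ ξ₁ : ℝ, ∫ ξ₂ : ℝ, φ (ξ₁, ξ₂) * Complex.exp (-Complex.I * (v * ξ₁ + vs * ξ₂)))
      = ∫ x : ℂ, F₀ x := by
    rw [dgf_complex_to_iterated F₀ hF₀int, hF₀]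
    simp only [dgf_re, dgf_im, Complex.ofReal_add, Complex.ofReal_mul]
  have hwre : (dgfW θ : ℂ).re = s := by
    rw [dgfW_coe]
    simp only [Complex.add_re, Complex.mul_re, Complex.ofReal_re, Complex.ofReal_im,
      Complex.I_re, Complex.I_im]
    norm_num [hs]
  have hwim : (dgfW θ : ℂ).im = c := by
    rw [dgfW_coe]
    simp only [Complex.add_im, Complex.mul_im, Complex.ofReal_re, Complex.ofReal_im,
      Complex.I_re, Complex.I_im]
    norm_num [hc]
  have step2 : ∫ x : ℂ, F₀ x = ∫ x : ℂ, F₀ ((dgfW θ : ℂ) * x) := (dgf_rotation_integral _ _).symm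
  have step3 : ∀ x : ℂ, F₀ ((dgfW θ : ℂ) * x) = dgfPhi θ φ x *
      Complex.exp (-Complex.I *
        (((v * s + vs * c) * x.re + (-v * c + vs * s) * x.im : ℝ) : ℂ)) := by
    intro x
    have harg : (v * ((dgfW θ : ℂ) * x).re + vs * ((dgfW θ : ℂ) * x).im : ℝ)
        = ((v * s + vs * c) * x.re + (-v * c + vs * s) * x.im) := by
      rw [Complex.mul_re, Complex.mul_im, hwre, hwim]; ring
    rw [hF₀]
    simp only
    rw [harg, dgfPhi_apply]
  have step4 : ∫ x : ℂ, F₀ ((dgfW θ : ℂ) * x) =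
      ∫ u : ℝ, ∫ σ : ℝ, dgfPhi θ φ (u + σ * Complex.I) *
      Complex.exp (-Complex.I *
        (((v * s + vs * c) * u + (-v * c + vs * s) * σ : ℝ) : ℂ)) := by
    simp only [step3]
    rw [dgf_complex_to_iterated _ (dgf_integrable_phase (dgfPhi θ φ)
      (fun x ↦ (v * s + vs * c) * x.re + (-v * c + vs * s) * x.im) (by continuity))]
    simp only [dgf_re, dgf_im]
  rw [step1, step2, step4]
  simp only [Complex.ofReal_add, Complex.ofReal_mul, Complex.ofReal_neg]

end DGFInner

noncomputable section DGFLine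
open MeasureTheory Real Complex FourierTransform SchwartzMap

private lemma dgf_sep_bound' (f : SchwartzMap ℂ ℂ) :
    ∃ C : ℝ, 0 ≤ C ∧ ∀ u σ : ℝ, ‖f (u + σ * Complex.I)‖ ≤ C / ((1 + u ^ 2) * (1 + σ ^ 2)) := by
  obtain ⟨C, hC0, hC⟩ := dgf_sep_bound f
  refine ⟨C, hC0, fun u σ ↦ ?_⟩
  have h := hC (u + σ * Complex.I)
  rwa [dgf_re, dgf_im] at h

private lemma dgf_line_integral (θ : ℝ) (φ : SchwartzMap (ℝ × ℝ) ℂ) (a : ℝ) :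
    ∫ t : ℝ, dgfPsi θ φ (a + t * Complex.I) =
      ∫ u : ℝ, dgfPhi θ φ u *
        Complex.exp (-Complex.I * (((2 * Real.pi * a) * u : ℝ) : ℂ)) := by
  obtain ⟨C, hC0, hC⟩ := dgf_sep_bound' (dgfPhi θ φ)
  set k : ℝ → ℂ := fun σ ↦ ∫ u : ℝ, dgfPhi θ φ (u + σ * Complex.I) *
    Complex.exp (-Complex.I * (((2 * Real.pi * a) * u : ℝ) : ℂ)) with hk
  have hπ : (Real.pi : ℝ) ≠ 0 := Real.pi_ne_zero
  -- uniform bound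
  have hbu : ∀ σ u : ℝ, ‖dgfPhi θ φ (u + σ * Complex.I) *
      Complex.exp (-Complex.I * (((2 * Real.pi * a) * u : ℝ) : ℂ))‖ ≤
        C / ((1 + u ^ 2) * (1 + σ ^ 2)) := fun σ u ↦ by
    rw [norm_mul, dgf_phase_norm, mul_one]
    exact hC u σ
  -- k is continuous
  have hkcont : Continuous k := by
    rw [hk]
    refine continuous_of_dominated (bound := fun u : ℝ ↦ C * (1 + u ^ 2)⁻¹)
      (fun σ ↦ (((dgfPhi θ φ).continuous.comp (by continuity)).mul
        (by continuity)).aestronglyMeasurable)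
      (fun σ ↦ Filter.Eventually.of_forall fun u ↦ ?_)
      (integrable_inv_one_add_sq.const_mul C)
      (Filter.Eventually.of_forall fun u ↦ by continuity)
    refine (hbu σ u).trans ?_
    beta_reduce
    rw [← div_eq_mul_inv]
    gcongr
    nlinarith [sq_nonneg σ, sq_nonneg u]
  -- k is integrable
  have hkint : Integrable k := by
    refine Integrable.mono' (g := fun σ : ℝ ↦ (C * Real.pi) * (1 + σ ^ 2)⁻¹)
      (integrable_inv_one_add_sq.const_mul _) hkcont.aestronglyMeasurable
      (Filter.Eventually.of_forall fun σ ↦ ?_)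
    rw [hk]
    have hint : Integrable (fun u : ℝ ↦ C * (1 + σ ^ 2)⁻¹ * (1 + u ^ 2)⁻¹) volume :=
      integrable_inv_one_add_sq.const_mul _
    have hble := norm_integral_le_of_norm_le hint
      (Filter.Eventually.of_forall fun u ↦ (hbu σ u).trans (le_of_eq (by
        rw [div_eq_mul_inv, mul_inv]; ring)))
    refine hble.trans (le_of_eq ?_)
    rw [MeasureTheory.integral_const_mul, integral_univ_inv_one_add_sq]
    ring
  -- Fourier transform of k
  have h𝓕k : ∀ t : ℝ, 𝓕 k t = dgfPsi θ φ (a + t * Complex.I) := by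
    intro t
    have hPsiEq := dgfPsi_eq θ φ (2 * Real.pi * a) (2 * Real.pi * t)
    rw [show (2 * Real.pi * a) / (2 * Real.pi) = a by field_simp,
      show (2 * Real.pi * t) / (2 * Real.pi) = t by field_simp] at hPsiEq
    rw [hPsiEq]
    -- collapse coercions in RHS and swap the iterated integrals
    have hcoe : ∀ u σ : ℝ, dgfPhi θ φ (u + σ * Complex.I) *
        Complex.exp (-Complex.I * ((2 * Real.pi * a : ℝ) * u + (2 * Real.pi * t : ℝ) * σ)) =
        dgfPhi θ φ (u + σ * Complex.I) *
        Complex.exp (-Complex.I * (((2 * Real.pi * a) * u + (2 * Real.pi * t) * σ : ℝ) : ℂ)) := by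
      intro u σ
      congr 2
      push_cast
      ring
    simp_rw [hcoe]
    have hswap := MeasureTheory.integral_integral_swap
      (f := fun u σ : ℝ ↦ dgfPhi θ φ (u + σ * Complex.I) *
        Complex.exp (-Complex.I * (((2 * Real.pi * a) * u + (2 * Real.pi * t) * σ : ℝ) : ℂ)))
      (by
        have h := dgf_integrable_prod_phase (dgfPhi θ φ)
          (fun p ↦ (2 * Real.pi * a) * p.1 + (2 * Real.pi * t) * p.2) (by continuity)
        rwa [Measure.volume_eq_prod] at h)
    rw [hswap]
    rw [Real.fourier_real_eq_integral_exp_smul]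
    congr 1
    ext σ
    rw [smul_eq_mul, hk, ← MeasureTheory.integral_const_mul]
    congr 1
    ext u
    rw [mul_comm (Complex.exp _) (dgfPhi θ φ _ * _), mul_assoc, ← Complex.exp_add]
    congr 2
    push_cast
    ring
  -- 𝓕 k is integrable
  have h𝓕int : Integrable (𝓕 k) :=
    (dgf_line_integrable_im (dgfPsi θ φ) a).congr
      (Filter.Eventually.of_forall fun t ↦ (h𝓕k t).symm)
  -- inversion
  have hinv := hkcont.fourierInv_fourier_eq hkint h𝓕int
  have h0 : k 0 = ∫ t : ℝ, 𝓕 k t := by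
    conv_lhs => rw [← hinv]
    rw [Real.fourierInv_eq]
    simp [Real.fourierChar_apply]
  calc ∫ t : ℝ, dgfPsi θ φ (a + t * Complex.I)
      = ∫ t : ℝ, 𝓕 k t :=
        integral_congr_ae (Filter.Eventually.of_forall fun t ↦ (h𝓕k t).symm)
    _ = k 0 := h0.symm
    _ = _ := by
        rw [hk]
        norm_num

end DGFLine

open MeasureTheory Real Complex FourierTransform SchwartzMap in
private lemma dgf_gauss_ft (u : ℝ) :
    (∫ y : ℝ, (Real.exp (-y ^ 2 / 4) : ℂ) * Complex.exp (-Complex.I * ((y * u : ℝ) : ℂ)))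
      = (Real.sqrt (4 * Real.pi) : ℂ) * Complex.exp (-(u : ℂ) ^ 2) := by
  have h := fourierIntegral_gaussian (b := (1/4 : ℂ)) (by norm_num) (-(u : ℂ))
  have heq : ∀ y : ℝ, (Real.exp (-y ^ 2 / 4) : ℂ) * Complex.exp (-Complex.I * ((y * u : ℝ) : ℂ))
      = Complex.exp (Complex.I * (-(u:ℂ)) * y) * Complex.exp (-(1/4 : ℂ) * y ^ 2) := by
    intro y
    rw [mul_comm]
    congr 1
    · congr 1; push_cast; ring
    · rw [Complex.ofReal_exp]; congr 1; push_cast; ring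
  simp_rw [heq]
  rw [h]
  congr 1
  · rw [show ((Real.pi : ℂ)) / (1/4 : ℂ) = ((4 * Real.pi : ℝ) : ℂ) by push_cast; ring,
      show ((1 : ℂ)/2) = ((1/2 : ℝ) : ℂ) by norm_num,
      ← Complex.ofReal_cpow (by positivity), Real.sqrt_eq_rpow]
  · congr 1
    push_cast
    ring_nf

open MeasureTheory Real Complex FourierTransform SchwartzMap in
/-- The 2D Fourier transform of `(v,v⋆) ↦ e^{-(v sin θ + v⋆ cos θ)²/4}`, as a tempered
distribution, equals `2π√(4π)·e^{-(ξ₁ sin θ + ξ₂ cos θ)²}·δ(-ξ₁ cos θ + ξ₂ sin θ)`.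
Tested against a Schwartz function `φ`: the line `{-ξ₁ cos θ + ξ₂ sin θ = 0}` is
parametrized by `u ↦ (u sin θ, u cos θ)` (unit speed), on which
`ξ₁ sin θ + ξ₂ cos θ = u`. -/
theorem degenerate_gaussian_fourier (θ : ℝ) (hθ0 : 0 < θ) (hθ : θ < Real.pi / 2)
    (φ : SchwartzMap (ℝ × ℝ) ℂ) :
    (∫ v : ℝ, ∫ vs : ℝ,
        (Real.exp (-(v * Real.sin θ + vs * Real.cos θ) ^ 2 / 4) : ℂ) *
          ∫ ξ₁ : ℝ, ∫ ξ₂ : ℝ,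
            φ (ξ₁, ξ₂) * Complex.exp (-Complex.I * (v * ξ₁ + vs * ξ₂))) =
      (2 * Real.pi * Real.sqrt (4 * Real.pi) : ℝ) *
        ∫ u : ℝ, (Real.exp (-u ^ 2) : ℂ) * φ (u * Real.sin θ, u * Real.cos θ) := by
  set s := Real.sin θ with hs
  set c := Real.cos θ with hc
  have hπ0 : (0:ℝ) < Real.pi := Real.pi_pos
  have hπ : (Real.pi : ℝ) ≠ 0 := Real.pi_ne_zero
  have hw2re : (dgfW₂ θ : ℂ).re = s := by
    rw [dgfW₂_coe]
    simp only [Complex.sub_re, Complex.mul_re, Complex.ofReal_re, Complex.ofReal_im,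
      Complex.I_re, Complex.I_im]
    norm_num [hs]
  have hw2im : (dgfW₂ θ : ℂ).im = -c := by
    rw [dgfW₂_coe]
    simp only [Complex.sub_im, Complex.mul_im, Complex.ofReal_re, Complex.ofReal_im,
      Complex.I_re, Complex.I_im]
    norm_num [hc]
  set G : ℂ → ℂ := fun x ↦ (Real.exp (-(x.re) ^ 2 / 4) : ℂ) *
      dgfPsi θ φ ((2 * Real.pi)⁻¹ • x) with hG
  have hPsiScaled : Integrable (fun x : ℂ ↦ dgfPsi θ φ ((2 * Real.pi)⁻¹ • x)) volume :=
    (integrable_comp_smul_iff volume (⇑(dgfPsi θ φ))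
      (inv_ne_zero (by positivity))).2 ((dgfPsi θ φ).integrable)
  have hgaussbd : ∀ x : ℂ, ‖((Real.exp (-(x.re) ^ 2 / 4) : ℝ) : ℂ)‖ ≤ 1 := by
    intro x
    rw [Complex.norm_real, Real.norm_eq_abs, abs_of_pos (Real.exp_pos _)]
    rw [Real.exp_le_one_iff]
    nlinarith [sq_nonneg x.re]
  have hGint : Integrable G volume := by
    rw [hG]
    exact hPsiScaled.bdd_mul (Continuous.aestronglyMeasurable (by continuity))
      (Filter.Eventually.of_forall hgaussbd)
  -- Step 1: pointwise identification of the integrand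
  have key1 : ∀ v vs : ℝ,
      (Real.exp (-(v * s + vs * c) ^ 2 / 4) : ℂ) *
        (∫ ξ₁ : ℝ, ∫ ξ₂ : ℝ, φ (ξ₁, ξ₂) * Complex.exp (-Complex.I * (v * ξ₁ + vs * ξ₂)))
      = G ((dgfW₂ θ : ℂ) * (v + vs * Complex.I)) := by
    intro v vs
    have hxre : ((dgfW₂ θ : ℂ) * (v + vs * Complex.I)).re = v * s + vs * c := by
      rw [Complex.mul_re, hw2re, hw2im, dgf_re, dgf_im]; ring
    have hxim : ((dgfW₂ θ : ℂ) * (v + vs * Complex.I)).im = -v * c + vs * s := by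
      rw [Complex.mul_im, hw2re, hw2im, dgf_re, dgf_im]; ring
    have harg : (2 * Real.pi)⁻¹ • ((dgfW₂ θ : ℂ) * (v + vs * Complex.I)) =
        ((v * s + vs * c) / (2 * Real.pi) : ℝ) +
          ((-v * c + vs * s) / (2 * Real.pi) : ℝ) * Complex.I := by
      apply Complex.ext
      · rw [Complex.smul_re, hxre, dgf_re]
        rw [smul_eq_mul]
        ring
      · rw [Complex.smul_im, hxim, dgf_im]
        rw [smul_eq_mul]
        ring
    rw [dgf_inner_integral θ φ v vs, hG]
    simp only
    rw [hxre, harg, dgfPsi_eq θ φ (v * s + vs * c) (-v * c + vs * s)]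
    simp only [Complex.ofReal_add, Complex.ofReal_mul, Complex.ofReal_neg]
    rfl
  -- Step 2: rewrite the whole LHS
  have hiter : (∫ v : ℝ, ∫ vs : ℝ,
      (Real.exp (-(v * s + vs * c) ^ 2 / 4) : ℂ) *
        ∫ ξ₁ : ℝ, ∫ ξ₂ : ℝ, φ (ξ₁, ξ₂) * Complex.exp (-Complex.I * (v * ξ₁ + vs * ξ₂)))
      = ∫ v : ℝ, ∫ vs : ℝ, G ((dgfW₂ θ : ℂ) * (v + vs * Complex.I)) := by
    congr 1
    funext v
    congr 1
    funext vs
    exact key1 v vs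
  have hGcomp : Integrable (fun x : ℂ ↦ G ((dgfW₂ θ : ℂ) * x)) volume := by
    have h := ((rotation (dgfW₂ θ)).measurePreserving.integrable_comp_emb
      ((rotation (dgfW₂ θ)).toHomeomorph.measurableEmbedding)).2 hGint
    exact h.congr (Filter.Eventually.of_forall fun x ↦ by simp [Function.comp, rotation_apply])
  have key2 : (∫ v : ℝ, ∫ vs : ℝ, G ((dgfW₂ θ : ℂ) * (v + vs * Complex.I)))
      = ∫ x : ℂ, G x := by
    calc (∫ v : ℝ, ∫ vs : ℝ, G ((dgfW₂ θ : ℂ) * (v + vs * Complex.I)))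
        = ∫ x : ℂ, G ((dgfW₂ θ : ℂ) * x) :=
          (dgf_complex_to_iterated (fun x ↦ G ((dgfW₂ θ : ℂ) * x)) hGcomp).symm
      _ = ∫ x : ℂ, G x := dgf_rotation_integral _ _
  have key3 : ∫ x : ℂ, G x = ∫ y : ℝ, ∫ z : ℝ, G (y + z * Complex.I) :=
    dgf_complex_to_iterated G hGint
  -- Step 3: the inner z-integral
  have key4 : ∀ y : ℝ, (∫ z : ℝ, G (y + z * Complex.I)) =
      (Real.exp (-y ^ 2 / 4) : ℂ) * ((2 * Real.pi) *
        ∫ u : ℝ, dgfPhi θ φ u * Complex.exp (-Complex.I * ((y * u : ℝ) : ℂ))) := by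
    intro y
    have h1 : ∀ z : ℝ, G (y + z * Complex.I) = (Real.exp (-y ^ 2 / 4) : ℂ) *
        dgfPsi θ φ (((y / (2 * Real.pi) : ℝ) : ℂ) +
          ((z / (2 * Real.pi) : ℝ) : ℂ) * Complex.I) := by
      intro z
      rw [hG]
      simp only
      rw [dgf_re]
      congr 2
      apply Complex.ext
      · rw [Complex.smul_re, dgf_re, dgf_re, smul_eq_mul]; ring
      · rw [Complex.smul_im, dgf_im, dgf_im, smul_eq_mul]; ring
    simp_rw [h1]
    rw [MeasureTheory.integral_const_mul]
    congr 1
    have h2 := Measure.integral_comp_div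
      (fun t : ℝ ↦ dgfPsi θ φ (((y / (2 * Real.pi) : ℝ) : ℂ) + (t : ℂ) * Complex.I))
      (2 * Real.pi)
    rw [h2, dgf_line_integral θ φ (y / (2 * Real.pi)), abs_of_pos (by positivity)]
    have hyy : 2 * Real.pi * (y / (2 * Real.pi)) = y := by field_simp
    rw [hyy, real_smul]
    norm_cast
  -- Step 4: assemble, pull out constants, swap and apply the Gaussian integral
  rw [hiter, key2, key3]
  have key5 : (∫ y : ℝ, ∫ z : ℝ, G (y + z * Complex.I)) =
      ((2 * Real.pi : ℝ) : ℂ) * ∫ y : ℝ, ∫ u : ℝ, (Real.exp (-y ^ 2 / 4) : ℂ) *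
        (dgfPhi θ φ u * Complex.exp (-Complex.I * ((y * u : ℝ) : ℂ))) := by
    rw [← MeasureTheory.integral_const_mul]
    congr 1
    funext y
    calc (∫ z : ℝ, G (y + z * Complex.I))
        = (Real.exp (-y ^ 2 / 4) : ℂ) * ((2 * Real.pi) *
            ∫ u : ℝ, dgfPhi θ φ u * Complex.exp (-Complex.I * ((y * u : ℝ) : ℂ))) := key4 y
      _ = ((2 * Real.pi : ℝ) : ℂ) * ((Real.exp (-y ^ 2 / 4) : ℂ) *
            ∫ u : ℝ, dgfPhi θ φ u * Complex.exp (-Complex.I * ((y * u : ℝ) : ℂ))) := by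
          push_cast; ring
      _ = ((2 * Real.pi : ℝ) : ℂ) * ∫ u : ℝ, (Real.exp (-y ^ 2 / 4) : ℂ) *
            (dgfPhi θ φ u * Complex.exp (-Complex.I * ((y * u : ℝ) : ℂ))) := by
          rw [MeasureTheory.integral_const_mul]
  rw [key5]
  -- integrability for the swap
  have hPhiLine : Integrable (fun u : ℝ ↦ dgfPhi θ φ (u : ℂ)) volume := by
    have h := dgf_line_integrable_re (dgfPhi θ φ) 0
    exact h.congr (Filter.Eventually.of_forall fun u ↦ by norm_num)
  have hgaussInt : Integrable (fun y : ℝ ↦ ((Real.exp (-y ^ 2 / 4) : ℝ) : ℂ)) volume := by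
    have h : Integrable (fun y : ℝ ↦ Real.exp (-(1/4 : ℝ) * y ^ 2)) volume :=
      integrable_exp_neg_mul_sq (by norm_num)
    have h2 : Integrable (fun y : ℝ ↦ Real.exp (-y ^ 2 / 4)) volume :=
      h.congr (Filter.Eventually.of_forall fun y ↦ by
        beta_reduce
        rw [show -(1/4 : ℝ) * y ^ 2 = -y ^ 2 / 4 by ring])
    exact h2.ofReal
  have hswapInt : Integrable (Function.uncurry (fun y u : ℝ ↦ (Real.exp (-y ^ 2 / 4) : ℂ) *
      (dgfPhi θ φ u * Complex.exp (-Complex.I * ((y * u : ℝ) : ℂ)))))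
      ((volume : Measure ℝ).prod volume) := by
    have hbase := hgaussInt.mul_prod hPhiLine
    have h := hbase.bdd_mul
      (f := fun p : ℝ × ℝ ↦ Complex.exp (-Complex.I * ((p.1 * p.2 : ℝ) : ℂ)))
      ((Complex.continuous_exp.comp (continuous_const.mul (Complex.continuous_ofReal.comp
        (continuous_fst.mul continuous_snd)))).aestronglyMeasurable)
      (Filter.Eventually.of_forall fun p ↦ le_of_eq (dgf_phase_norm _))
    exact h.congr (Filter.Eventually.of_forall fun p ↦ by
      simp only [Function.uncurry]
      ring)
  rw [MeasureTheory.integral_integral_swap hswapInt]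
  -- pull out and compute the Gaussian integral
  have key6 : ∀ u : ℝ, (∫ y : ℝ, (Real.exp (-y ^ 2 / 4) : ℂ) *
      (dgfPhi θ φ u * Complex.exp (-Complex.I * ((y * u : ℝ) : ℂ))))
      = dgfPhi θ φ u * ((Real.sqrt (4 * Real.pi) : ℂ) * Complex.exp (-(u : ℂ) ^ 2)) := by
    intro u
    rw [← dgf_gauss_ft u, ← MeasureTheory.integral_const_mul]
    congr 1
    funext y
    ring
  simp_rw [key6]
  -- final bookkeeping
  have key7 : ∀ u : ℝ, dgfPhi θ φ u * ((Real.sqrt (4 * Real.pi) : ℂ) *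
      Complex.exp (-(u : ℂ) ^ 2)) = (Real.sqrt (4 * Real.pi) : ℂ) *
        ((Real.exp (-u ^ 2) : ℂ) * φ (u * s, u * c)) := by
    intro u
    have hPhi : dgfPhi θ φ (u : ℂ) = φ (u * s, u * c) := by
      rw [dgfPhi_apply]
      congr 1
      have h1 : ((dgfW θ : ℂ) * (u : ℂ)).re = u * s := by
        rw [Complex.mul_re, dgfW_coe]
        simp only [Complex.add_re, Complex.add_im, Complex.mul_re, Complex.mul_im,
          Complex.ofReal_re, Complex.ofReal_im, Complex.I_re, Complex.I_im]
        ring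
      have h2 : ((dgfW θ : ℂ) * (u : ℂ)).im = u * c := by
        rw [Complex.mul_im, dgfW_coe]
        simp only [Complex.add_re, Complex.add_im, Complex.mul_re, Complex.mul_im,
          Complex.ofReal_re, Complex.ofReal_im, Complex.I_re, Complex.I_im]
        ring
      rw [h1, h2]
    have hexp : Complex.exp (-(u : ℂ) ^ 2) = ((Real.exp (-u ^ 2) : ℝ) : ℂ) := by
      rw [Complex.ofReal_exp]
      push_cast
      ring_nf
    rw [hPhi, hexp]
    ring
  simp_rw [key7]
  rw [MeasureTheory.integral_const_mul]
  push_cast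
  ring
end

section
/- Let 0 < s̃ ≤ 1/2, Ψ_s(t,η,ξ) = c₀∫₀ᵗ⟨ξ+ρη⟩^{2s̃}dρ, and M_δ(t,η,ξ) = e^{Ψ_s}/(1+δe^{Ψ_s}) for 0<δ<1. With ξ' = ξcos θ − u sin θ, u' = ξ sin θ + u cos θ, and ξ_τ = ξ' − τ(ξ' − ξ) for τ ∈ [0,1], there is a constant C (independent of δ, τ, θ, and all variables) such that M_δ(t,η,ξ_τ) ≤ C · M_δ(t,η₁,ξ') · max{M_δ(t,η−η₁,u'), M_δ(t,η−η₁,−u')} · e^{c₀t⟨u⟩^{2s̃}} for all η, η₁, ξ, u ∈ ℝ, θ ∈ (−π/2, π/2), t ∈ [0,T]. -/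
open MeasureTheory

private lemma rpow_add_two (x y p : ℝ) (hx : 0 ≤ x) (hy : 0 ≤ y) (hp : 0 ≤ p) (hp1 : p ≤ 1) :
    (x + y) ^ p ≤ x ^ p + y ^ p := by
  have h := NNReal.rpow_add_le_add_rpow x.toNNReal y.toNNReal hp hp1
  have := NNReal.coe_le_coe.2 h
  push_cast [NNReal.coe_rpow, Real.coe_toNNReal _ hx, Real.coe_toNNReal _ hy,
    ← Real.toNNReal_add hx hy, Real.coe_toNNReal _ (by positivity : (0:ℝ) ≤ x + y)] at this
  exact this

/-- Three-fold subadditivity of the Japanese bracket to the power `2s` for `2s ≤ 1`. -/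
private lemma bracket_sub3 (s : ℝ) (hs0 : 0 < s) (hs1 : s ≤ 1 / 2) (a b c : ℝ) :
    (1 + (a + b + c) ^ 2) ^ s ≤ (1 + a ^ 2) ^ s + (1 + b ^ 2) ^ s + (1 + c ^ 2) ^ s := by
  set A := Real.sqrt (1 + a ^ 2) with hA
  set B := Real.sqrt (1 + b ^ 2) with hB
  set C := Real.sqrt (1 + c ^ 2) with hC
  have hA0 : 0 ≤ A := Real.sqrt_nonneg _
  have hB0 : 0 ≤ B := Real.sqrt_nonneg _
  have hC0 : 0 ≤ C := Real.sqrt_nonneg _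
  have hA2 : A ^ 2 = 1 + a ^ 2 := Real.sq_sqrt (by positivity)
  have hB2 : B ^ 2 = 1 + b ^ 2 := Real.sq_sqrt (by positivity)
  have hC2 : C ^ 2 = 1 + c ^ 2 := Real.sq_sqrt (by positivity)
  have hab : a * b ≤ A * B := by nlinarith [sq_nonneg (A * B - a * b), sq_nonneg (A * B + a * b), mul_nonneg hA0 hB0, sq_nonneg (a - b), sq_nonneg (a + b)]
  have hac : a * c ≤ A * C := by nlinarith [sq_nonneg (A * C - a * c), sq_nonneg (A * C + a * c), mul_nonneg hA0 hC0, sq_nonneg (a - c), sq_nonneg (a + c)]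
  have hbc : b * c ≤ B * C := by nlinarith [sq_nonneg (B * C - b * c), sq_nonneg (B * C + b * c), mul_nonneg hB0 hC0, sq_nonneg (b - c), sq_nonneg (b + c)]
  have step1 : 1 + (a + b + c) ^ 2 ≤ (A + B + C) ^ 2 := by nlinarith
  have h2s0 : 0 ≤ 2 * s := by linarith
  have h2s1 : 2 * s ≤ 1 := by linarith
  calc (1 + (a + b + c) ^ 2) ^ s ≤ ((A + B + C) ^ 2) ^ s :=
        Real.rpow_le_rpow (by positivity) step1 hs0.le
    _ = (A + B + C) ^ (2 * s) := by
        rw [← Real.rpow_natCast_mul (by positivity) 2 s]; norm_num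
    _ ≤ A ^ (2 * s) + B ^ (2 * s) + C ^ (2 * s) := by
        calc (A + B + C) ^ (2 * s) ≤ (A + B) ^ (2 * s) + C ^ (2 * s) :=
              rpow_add_two _ _ _ (by positivity) hC0 h2s0 h2s1
          _ ≤ A ^ (2 * s) + B ^ (2 * s) + C ^ (2 * s) := by
              have := rpow_add_two A B (2 * s) hA0 hB0 h2s0 h2s1
              linarith
    _ = (1 + a ^ 2) ^ s + (1 + b ^ 2) ^ s + (1 + c ^ 2) ^ s := by
        rw [← hA2, ← hB2, ← hC2,
          ← Real.rpow_natCast_mul hA0 2 s, ← Real.rpow_natCast_mul hB0 2 s,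
          ← Real.rpow_natCast_mul hC0 2 s]
        norm_num

/-- Monotonicity of `x ↦ x/(1+δx)` on nonnegative reals. -/
private lemma frac_mono {δ x y : ℝ} (hδ : 0 < δ) (hx : 0 ≤ x) (hxy : x ≤ y) :
    x / (1 + δ * x) ≤ y / (1 + δ * y) := by
  have hy : 0 ≤ y := hx.trans hxy
  rw [div_le_div_iff₀ (by positivity) (by positivity)]
  nlinarith

/-- Trilinear inequality for the saturated multiplier. -/
private lemma frac_tri {δ A B C : ℝ} (hδ : 0 < δ) (hδ1 : δ < 1)
    (hA : 1 ≤ A) (hB : 1 ≤ B) (hC : 1 ≤ C) :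
    A * B * C / (1 + δ * (A * B * C)) ≤ 9 * (A / (1 + δ * A)) * (B / (1 + δ * B)) * C := by
  have hA0 : 0 < A := by linarith
  have hB0 : 0 < B := by linarith
  have hC0 : 0 < C := by linarith
  have hBC : 1 ≤ B * C := by nlinarith
  have hAC : 1 ≤ A * C := by nlinarith
  have e1 : δ * A ≤ δ * (A * B * C) := by
    nlinarith [mul_nonneg (mul_nonneg hδ.le hA0.le) (sub_nonneg.2 hBC)]
  have e2 : δ * B ≤ δ * (A * B * C) := by
    nlinarith [mul_nonneg (mul_nonneg hδ.le hB0.le) (sub_nonneg.2 hAC)]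
  have e3 : δ * δ * (A * B) ≤ δ * (A * B * C) := by
    nlinarith [mul_nonneg (mul_nonneg hδ.le (mul_nonneg hA0.le hB0.le))
      (by linarith : (0:ℝ) ≤ C - δ)]
  have key : (1 + δ * A) * (1 + δ * B) ≤ 9 * (1 + δ * (A * B * C)) := by nlinarith
  have h1 : 0 < 1 + δ * A := by positivity
  have h2 : 0 < 1 + δ * B := by positivity
  have h3 : 0 < 1 + δ * (A * B * C) := by positivity
  rw [div_le_iff₀ h3]
  have : 9 * (A / (1 + δ * A)) * (B / (1 + δ * B)) * C = 9 * (A * B * C) / ((1 + δ * A) * (1 + δ * B)) := by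
    field_simp
  rw [this, div_mul_eq_mul_div, le_div_iff₀ (by positivity)]
  nlinarith [mul_pos (mul_pos hA0 hB0) hC0]

set_option maxHeartbeats 1000000 in
/-- Key multiplier inequality (Lemma 7num): with `Ψ_s(t,η,ξ) = c₀∫₀ᵗ⟨ξ+ρη⟩^{2s̃}dρ`,
`M_δ = e^{Ψ_s}/(1+δe^{Ψ_s})`, `ξ' = ξ cos θ - u sin θ`, `u' = ξ sin θ + u cos θ`,
`ξ_τ = ξ' - τ(ξ'-ξ)`, there is an absolute constant `C` such that
`M_δ(t,η,ξ_τ) ≤ C·M_δ(t,η₁,ξ')·max{M_δ(t,η-η₁,u'), M_δ(t,η-η₁,-u')}·e^{c₀t⟨u⟩^{2s̃}}`. -/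
theorem multiplier_trilinear_bound (c₀ s : ℝ) (hc₀ : 0 < c₀) (hs0 : 0 < s)
    (hs1 : s ≤ 1 / 2)
    (Ψ : ℝ → ℝ → ℝ → ℝ)
    (hΨ : ∀ t η ξ, Ψ t η ξ = c₀ * ∫ ρ in (0 : ℝ)..t, (1 + (ξ + ρ * η) ^ 2) ^ s)
    (M : ℝ → ℝ → ℝ → ℝ → ℝ)
    (hM : ∀ δ t η ξ, M δ t η ξ = Real.exp (Ψ t η ξ) / (1 + δ * Real.exp (Ψ t η ξ))) :
    ∃ C : ℝ, 0 < C ∧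
      ∀ (T : ℝ), 0 < T →
      ∀ (δ : ℝ), 0 < δ → δ < 1 →
      ∀ (τ : ℝ), 0 ≤ τ → τ ≤ 1 →
      ∀ (θ : ℝ), -(Real.pi / 2) < θ → θ < Real.pi / 2 →
      ∀ (t : ℝ), 0 ≤ t → t ≤ T →
      ∀ η η₁ ξ u : ℝ,
        M δ t η (ξ * Real.cos θ - u * Real.sin θ -
            τ * ((ξ * Real.cos θ - u * Real.sin θ) - ξ)) ≤
          C * M δ t η₁ (ξ * Real.cos θ - u * Real.sin θ) *
            max (M δ t (η - η₁) (ξ * Real.sin θ + u * Real.cos θ))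
                (M δ t (η - η₁) (-(ξ * Real.sin θ + u * Real.cos θ))) *
            Real.exp (c₀ * t * (1 + u ^ 2) ^ s) := by
  -- continuity of the integrand
  have hcont : ∀ x y : ℝ, Continuous fun ρ : ℝ => (1 + (x + ρ * y) ^ 2) ^ s := by
    intro x y
    exact (by fun_prop : Continuous fun ρ : ℝ => 1 + (x + ρ * y) ^ 2).rpow_const
      (fun ρ => Or.inr hs0.le)
  -- nonnegativity of Ψ
  have hΨ0 : ∀ t η ξ : ℝ, 0 ≤ t → 0 ≤ Ψ t η ξ := by
    intro t η ξ ht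
    rw [hΨ]
    have : 0 ≤ ∫ ρ in (0:ℝ)..t, (1 + (ξ + ρ * η) ^ 2) ^ s :=
      intervalIntegral.integral_nonneg ht (fun ρ _ => by positivity)
    positivity
  refine ⟨9, by norm_num, ?_⟩
  intro T hT δ hδ hδ1 τ hτ0 hτ1 θ hθ1 hθ2 t ht0 htT η η₁ ξ u
  set ξ' := ξ * Real.cos θ - u * Real.sin θ with hξ'
  set u' := ξ * Real.sin θ + u * Real.cos θ with hu'
  set ν := η - η₁ with hν
  have hcosθ : 0 < Real.cos θ := Real.cos_pos_of_mem_Ioo ⟨hθ1, hθ2⟩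
  have h1c : 0 < 1 + Real.cos θ := by linarith
  set lam := τ * Real.sin θ / (1 + Real.cos θ) with hlam
  have hsin1 : Real.sin θ ≤ 1 := Real.sin_le_one θ
  have hsin1' : -1 ≤ Real.sin θ := Real.neg_one_le_sin θ
  have hlam1 : lam ≤ 1 := by
    rw [hlam, div_le_one h1c]; nlinarith
  have hlam1' : -1 ≤ lam := by
    rw [hlam, le_div_iff₀ h1c]; nlinarith
  have hlamsq : lam ^ 2 ≤ 1 := by nlinarith
  -- key algebraic identity
  have hid : ξ' - τ * (ξ' - ξ) = ξ' + lam * u' + lam * u := by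
    rw [hlam, hξ', hu']
    have hpyth := Real.sin_sq_add_cos_sq θ
    field_simp
    ring_nf
    linear_combination (-(τ * ξ)) * Real.sin_sq_add_cos_sq θ
  -- choice of sign
  set σ : ℝ := if 0 ≤ u' * ν then 1 else -1 with hσ
  have hσ2 : σ ^ 2 = 1 := by rw [hσ]; split <;> norm_num
  have hσuv : 0 ≤ σ * (u' * ν) := by
    rw [hσ]; split
    · simpa using ‹0 ≤ u' * ν›
    · rename_i h
      have h' : u' * ν < 0 := lt_of_not_ge h
      nlinarith
  -- pointwise bound on the integrand
  have hpt : ∀ ρ : ℝ, 0 ≤ ρ →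
      (1 + ((ξ' - τ * (ξ' - ξ)) + ρ * η) ^ 2) ^ s ≤
        (1 + (ξ' + ρ * η₁) ^ 2) ^ s + (1 + (σ * u' + ρ * ν) ^ 2) ^ s + (1 + u ^ 2) ^ s := by
    intro ρ hρ
    have hdecomp : (ξ' - τ * (ξ' - ξ)) + ρ * η =
        (ξ' + ρ * η₁) + (lam * u' + ρ * ν) + lam * u := by
      rw [hid, hν]; ring
    rw [hdecomp]
    have h3 := bracket_sub3 s hs0 hs1 (ξ' + ρ * η₁) (lam * u' + ρ * ν) (lam * u)
    have hb : (1 + (lam * u' + ρ * ν) ^ 2) ^ s ≤ (1 + (σ * u' + ρ * ν) ^ 2) ^ s := by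
      apply Real.rpow_le_rpow (by positivity) _ hs0.le
      have : (lam * u' + ρ * ν) ^ 2 ≤ (σ * u' + ρ * ν) ^ 2 := by
        rw [hσ]; split
        · rename_i h; simp only [one_mul]
          nlinarith [mul_nonneg (sub_nonneg.2 hlam1) (mul_nonneg hρ h),
            mul_nonneg (sub_nonneg.2 hlamsq) (sq_nonneg u')]
        · rename_i h
          have h' : u' * ν ≤ 0 := le_of_not_ge h
          nlinarith [mul_nonneg (by linarith : (0:ℝ) ≤ 1 + lam)
              (neg_nonneg.2 (mul_nonpos_of_nonneg_of_nonpos hρ h')),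
            mul_nonneg (sub_nonneg.2 hlamsq) (sq_nonneg u')]
      linarith
    have hc : (1 + (lam * u) ^ 2) ^ s ≤ (1 + u ^ 2) ^ s := by
      apply Real.rpow_le_rpow (by positivity) _ hs0.le
      nlinarith [sq_nonneg u]
    linarith
  -- integral bound on Ψ
  have hΨbound : Ψ t η (ξ' - τ * (ξ' - ξ)) ≤
      Ψ t η₁ ξ' + Ψ t ν (σ * u') + c₀ * t * (1 + u ^ 2) ^ s := by
    rw [hΨ, hΨ, hΨ]
    have hInt : (∫ ρ in (0:ℝ)..t, (1 + ((ξ' - τ * (ξ' - ξ)) + ρ * η) ^ 2) ^ s) ≤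
        ∫ ρ in (0:ℝ)..t,
          ((1 + (ξ' + ρ * η₁) ^ 2) ^ s + (1 + (σ * u' + ρ * ν) ^ 2) ^ s + (1 + u ^ 2) ^ s) := by
      apply intervalIntegral.integral_mono_on ht0
      · exact (hcont _ _).intervalIntegrable _ _
      · exact (((hcont ξ' η₁).add (hcont (σ * u') ν)).add continuous_const).intervalIntegrable _ _
      · intro ρ hρ
        exact hpt ρ hρ.1
    have hsplit : (∫ ρ in (0:ℝ)..t,
          ((1 + (ξ' + ρ * η₁) ^ 2) ^ s + (1 + (σ * u' + ρ * ν) ^ 2) ^ s + (1 + u ^ 2) ^ s)) =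
        (∫ ρ in (0:ℝ)..t, (1 + (ξ' + ρ * η₁) ^ 2) ^ s) +
        (∫ ρ in (0:ℝ)..t, (1 + (σ * u' + ρ * ν) ^ 2) ^ s) + t * (1 + u ^ 2) ^ s := by
      rw [intervalIntegral.integral_add (f := fun ρ => (1 + (ξ' + ρ * η₁) ^ 2) ^ s + (1 + (σ * u' + ρ * ν) ^ 2) ^ s) (((hcont ξ' η₁).add (hcont (σ * u') ν)).intervalIntegrable _ _)
        (intervalIntegrable_const),
        intervalIntegral.integral_add ((hcont ξ' η₁).intervalIntegrable _ _)
        ((hcont (σ * u') ν).intervalIntegrable _ _), intervalIntegral.integral_const]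
      simp [smul_eq_mul]
    rw [hsplit] at hInt
    have key : ∀ x y z : ℝ, x ≤ y + z + t * (1 + u ^ 2) ^ s →
        c₀ * x ≤ c₀ * y + c₀ * z + c₀ * t * (1 + u ^ 2) ^ s := by
      intro x y z h
      calc c₀ * x ≤ c₀ * (y + z + t * (1 + u ^ 2) ^ s) :=
            mul_le_mul_of_nonneg_left h hc₀.le
        _ = c₀ * y + c₀ * z + c₀ * t * (1 + u ^ 2) ^ s := by ring
    exact key _ _ _ hInt
  -- exponentials
  set A := Real.exp (Ψ t η₁ ξ') with hAdef
  set B := Real.exp (Ψ t ν (σ * u')) with hBdef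
  set Cu := Real.exp (c₀ * t * (1 + u ^ 2) ^ s) with hCdef
  have hA1 : 1 ≤ A := Real.one_le_exp (hΨ0 t η₁ ξ' ht0)
  have hB1 : 1 ≤ B := Real.one_le_exp (hΨ0 t ν (σ * u') ht0)
  have hC1 : 1 ≤ Cu := Real.one_le_exp (by positivity)
  have hEτ : Real.exp (Ψ t η (ξ' - τ * (ξ' - ξ))) ≤ A * B * Cu := by
    rw [hAdef, hBdef, hCdef, ← Real.exp_add, ← Real.exp_add]
    exact Real.exp_le_exp.2 hΨbound
  -- final chain
  have hMτ : M δ t η (ξ' - τ * (ξ' - ξ)) ≤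
      9 * (A / (1 + δ * A)) * (B / (1 + δ * B)) * Cu := by
    rw [hM]
    calc Real.exp (Ψ t η (ξ' - τ * (ξ' - ξ))) /
          (1 + δ * Real.exp (Ψ t η (ξ' - τ * (ξ' - ξ)))) ≤
        A * B * Cu / (1 + δ * (A * B * Cu)) :=
          frac_mono hδ (Real.exp_pos _).le hEτ
      _ ≤ 9 * (A / (1 + δ * A)) * (B / (1 + δ * B)) * Cu := frac_tri hδ hδ1 hA1 hB1 hC1
  have hBmax : B / (1 + δ * B) ≤ max (M δ t ν u') (M δ t ν (-u')) := by
    rw [hBdef, hσ]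
    split
    · rw [one_mul]; exact le_max_of_le_left (le_of_eq (hM δ t ν u').symm)
    · have : (-1 : ℝ) * u' = -u' := by ring
      rw [this]; exact le_max_of_le_right (le_of_eq (hM δ t ν (-u')).symm)
  have hMA : M δ t η₁ ξ' = A / (1 + δ * A) := by rw [hM, hAdef]
  calc M δ t η (ξ' - τ * (ξ' - ξ)) ≤ 9 * (A / (1 + δ * A)) * (B / (1 + δ * B)) * Cu := hMτ
    _ ≤ 9 * (A / (1 + δ * A)) * max (M δ t ν u') (M δ t ν (-u')) * Cu := by
        have h9A : 0 ≤ 9 * (A / (1 + δ * A)) := by positivity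
        have hCu0 : 0 ≤ Cu := by positivity
        exact mul_le_mul_of_nonneg_right (mul_le_mul_of_nonneg_left hBmax h9A) hCu0
    _ = 9 * M δ t η₁ ξ' * max (M δ t ν u') (M δ t ν (-u')) * Cu := by rw [hMA]
end
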